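/- Let p be an odd prime, 0 ≤ r ≤ p−1, and ρ = Sym^{2r}(F̄_p²)⊗det^{−r} the representation of PGL₂(F_p). With X the averaging operator over the split torus H and Y the averaging operator over the nonsplit torus K = ⟨[[1,α],[1,1]]⟩ (of order p+1), and with v_H = x^r y^r, v_K = (αx²−y²)^r, write Xv_K = s·v_H and Yv_H = t·v_K. Then st = (−1)^{(p−1)/2}·C(r, r/2)·C(p−1−r, (p−1−r)/2) in F_p if r is even, and st = 0 if r is odd. -/

import Mathlib

/-!
Both `s` and `t` are read off by specialising the variables. Under `(x, y) ↦ (1, T)` every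
`ρ(diag(a, 1)) v_K = a⁻ʳ (αa²x² - y²)ʳ` has the same `Tʳ`-coefficient `C(r, r/2) (-α)^{r/2}`
(zero for odd `r`), and that is `s`. Under `(x, y) ↦ (0, 1)`, `v_K` becomes `(-1)ʳ` and `Y v_H`
becomes `[r = 0] + ∑_z zʳ (1 - αz²)⁻ʳ`. Since `α` is not a square, `1 - αz²` never vanishes, so the
inverse power is `(1 - αz²)^{p-1-r}`; expanding it binomially, the power sums `∑_z zⁱ` vanish
unless `p - 1 ∣ i > 0`, which leaves `t = -C(n, n/2) (-α)^{n/2}` with `n = p - 1 - r`. Finally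
`α^{(p-1)/2} = -1` by Euler's criterion.
-/

open MvPolynomial Matrix

/-- The action of a `2 × 2` matrix `g` on homogeneous polynomials of degree `2r` in
`x = X 0`, `y = X 1` defining the representation `Sym^{2r}(F̄_p²) ⊗ det^{-r}`:
`(ρ(g)·f)(x, y) = f(ax + cy, bx + dy) · det(g)^{-r}` for `g = [[a,b],[c,d]]`. -/
noncomputable def symDetAct (p r : ℕ) [Fact p.Prime]
    (g : Matrix (Fin 2) (Fin 2) (AlgebraicClosure (ZMod p)))
    (P : MvPolynomial (Fin 2) (AlgebraicClosure (ZMod p))) :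
    MvPolynomial (Fin 2) (AlgebraicClosure (ZMod p)) :=
  C ((g.det) ^ r)⁻¹ *
    MvPolynomial.bind₁
      ![C (g 0 0) * X 0 + C (g 1 0) * X 1, C (g 0 1) * X 0 + C (g 1 1) * X 1] P

theorem one_sub_mul_sq_ne_zero {K : Type*} [Field K] {α : K} (hα : ¬IsSquare α) (z : K) :
    1 - α * z ^ 2 ≠ 0 := by
  intro h
  have hz : z ≠ 0 := by rintro rfl; simp at h
  exact hα ⟨z⁻¹, by field_simp; linear_combination -h⟩

namespace FiniteField

variable {K : Type*} [Field K] [Fintype K]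

local notation "q" => Fintype.card K

theorem sum_pow (i : ℕ) : ∑ x : K, x ^ i = if i ≠ 0 ∧ q - 1 ∣ i then -1 else 0 := by
  classical
  rcases eq_or_ne i 0 with rfl | hi
  · simp
  rw [← Finset.sum_subset (Finset.subset_univ (Finset.univ.map
      ⟨((↑) : Kˣ → K), Units.val_injective⟩)), Finset.sum_map]
  · simp [hi, sum_pow_units]
  · intro x _ hx
    have hx0 : x = 0 := by
      by_contra h
      exact hx (Finset.mem_map.mpr ⟨Units.mk0 x h, Finset.mem_univ _, rfl⟩)
    simp [hx0, hi]

theorem sum_pow_add_two_mul {r n m : ℕ} (hrn : r + n = q - 1) (hn : Even n) (hm : m ≤ n) :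
    ∑ x : K, x ^ (r + 2 * m) =
      -(if m = n / 2 then 1 else 0) - (if r = 0 ∧ m = n then 1 else 0) := by
  have hq : 1 < q := Fintype.one_lt_card
  obtain ⟨n', rfl⟩ := hn
  have hdvd :
      (r + 2 * m ≠ 0 ∧ q - 1 ∣ r + 2 * m) ↔ (m = n' ∨ (r = 0 ∧ m = n' + n')) := by
    constructor
    · rintro ⟨hne, d, hd⟩
      have hd3 : d < 3 := by
        by_contra! h
        have := Nat.mul_le_mul_left (q - 1) h
        omega
      interval_cases d <;> omega
    · rintro (h | h)
      · refine ⟨?_, 1, ?_⟩ <;> omega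
      · refine ⟨?_, 2, ?_⟩ <;> omega
  rw [sum_pow, if_congr hdvd rfl rfl, show (n' + n') / 2 = n' by omega]
  by_cases hmid : m = n'
  · rw [if_pos (Or.inl hmid), if_pos hmid, if_neg (by omega)]
    ring
  · simp only [hmid, false_or, if_false]
    split_ifs <;> ring

theorem sum_pow_mul_one_add_mul_sq_pow (c : K) {r n : ℕ} (hrn : r + n = q - 1) (hn : Even n) :
    ∑ x : K, x ^ r * (1 + c * x ^ 2) ^ n =
      -((n.choose (n / 2) : K) * c ^ (n / 2)) - if r = 0 then c ^ n else 0 := by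
  have hexpand (x : K) : x ^ r * (1 + c * x ^ 2) ^ n =
      ∑ m ∈ Finset.range (n + 1), (n.choose m : K) * c ^ m * x ^ (r + 2 * m) := by
    rw [add_comm, add_pow, Finset.mul_sum]
    refine Finset.sum_congr rfl fun m _ => ?_
    ring
  simp only [hexpand]
  rw [Finset.sum_comm]
  simp only [← Finset.mul_sum]
  rw [Finset.sum_congr rfl fun m hm =>
    by rw [sum_pow_add_two_mul hrn hn (Nat.lt_succ_iff.mp (Finset.mem_range.mp hm))]]
  simp only [mul_sub, mul_neg, mul_ite, mul_one, mul_zero, Finset.sum_sub_distrib,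
    Finset.sum_neg_distrib, Finset.sum_ite_eq', Finset.mem_range]
  rw [if_pos (by omega)]
  congr 1
  split_ifs with hr0 <;> simp [hr0]

theorem sum_pow_div_one_sub_mul_sq_pow {α : K} (hα : ¬IsSquare α) {r : ℕ} (hr : r ≤ q - 1)
    (hn : Even (q - 1 - r)) :
    (if r = 0 then 1 else 0) + ∑ z : K, z ^ r / (1 - α * z ^ 2) ^ r =
      -(((q - 1 - r).choose ((q - 1 - r) / 2) : K) * (-α) ^ ((q - 1 - r) / 2)) := by
  have hinv (z : K) :
      z ^ r / (1 - α * z ^ 2) ^ r = z ^ r * (1 + -α * z ^ 2) ^ (q - 1 - r) := by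
    have hne := one_sub_mul_sq_ne_zero hα z
    rw [div_eq_iff (pow_ne_zero _ hne), neg_mul, ← sub_eq_add_neg, mul_assoc, ← pow_add,
      Nat.sub_add_cancel hr, pow_card_sub_one_eq_one _ hne, mul_one]
  rw [Finset.sum_congr rfl fun z _ => hinv z, sum_pow_mul_one_add_mul_sq_pow _ (by omega) hn]
  split_ifs with hr0
  · have hα0 : -α ≠ 0 := neg_ne_zero.mpr fun h => hα ⟨0, by simp [h]⟩
    rw [hr0, Nat.sub_zero, pow_card_sub_one_eq_one _ hα0]
    ring
  · ring

end FiniteField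

theorem ZMod.pow_div_two_eq_neg_one_of_not_isSquare {p : ℕ} [Fact p.Prime] {a : ZMod p}
    (ha : ¬IsSquare a) : a ^ (p / 2) = -1 := by
  have ha0 : a ≠ 0 := by rintro rfl; exact ha ⟨0, by simp⟩
  exact (ZMod.pow_div_two_eq_neg_one_or_one p ha0).resolve_left
    fun h => ha ((ZMod.euler_criterion p ha0).mpr h)

theorem Polynomial.coeff_C_sub_X_sq_pow {R : Type*} [CommRing R] (c : R) (r : ℕ) :
    ((Polynomial.C c - Polynomial.X ^ 2) ^ r).coeff r =
      if Even r then (r.choose (r / 2) : R) * (-c) ^ (r / 2) else 0 := by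
  have h : (Polynomial.C c - Polynomial.X ^ 2) ^ r = Polynomial.C ((-1) ^ r) *
      Polynomial.expand R 2 ((Polynomial.X + Polynomial.C (-c)) ^ r) := by
    simp only [map_pow, map_add, Polynomial.expand_X, Polynomial.expand_C, ← mul_pow, map_neg,
      map_one]
    ring
  rw [h, Polynomial.coeff_C_mul, Polynomial.coeff_expand two_pos, Polynomial.coeff_X_add_C_pow]
  simp only [← even_iff_two_dvd]
  split_ifs with hr
  · obtain ⟨k, rfl⟩ := hr
    rw [Even.neg_one_pow ⟨k, rfl⟩, show k + k - (k + k) / 2 = (k + k) / 2 by omega]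
    ring
  · rw [mul_zero]

section

variable (p : ℕ) [Fact p.Prime]

local notation "𝔽" => AlgebraicClosure (ZMod p)

noncomputable def splitTorusAverage (r : ℕ) (P : MvPolynomial (Fin 2) 𝔽) :
    MvPolynomial (Fin 2) 𝔽 :=
  C ((p : 𝔽) - 1)⁻¹ * ∑ a : (ZMod p)ˣ, symDetAct p r !![algebraMap (ZMod p) 𝔽 a, 0; 0, 1] P

/-- `K` modulo scalars is represented by `[[0, α], [1, 0]]` and the `[[1, αz], [z, 1]]`,
`z ∈ 𝔽_p`. -/
noncomputable def nonsplitTorusAverage (r : ℕ) (α : ZMod p) (P : MvPolynomial (Fin 2) 𝔽) :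
    MvPolynomial (Fin 2) 𝔽 :=
  C ((p : 𝔽) + 1)⁻¹ *
    (symDetAct p r !![0, algebraMap (ZMod p) 𝔽 α; 1, 0] P +
      ∑ z : ZMod p,
        symDetAct p r !![1, algebraMap (ZMod p) 𝔽 (α * z); algebraMap (ZMod p) 𝔽 z, 1] P)

variable {p}

theorem aeval_symDetAct {A : Type*} [CommRing A] [Algebra 𝔽 A] (v : Fin 2 → A) (r : ℕ)
    (g : Matrix (Fin 2) (Fin 2) 𝔽) (P : MvPolynomial (Fin 2) 𝔽) :
    aeval v (symDetAct p r g P) = algebraMap 𝔽 A (g.det ^ r)⁻¹ *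
      aeval ![algebraMap 𝔽 A (g 0 0) * v 0 + algebraMap 𝔽 A (g 1 0) * v 1,
        algebraMap 𝔽 A (g 0 1) * v 0 + algebraMap 𝔽 A (g 1 1) * v 1] P := by
  rw [symDetAct, map_mul, aeval_C, aeval_bind₁]
  congr 2
  ext i
  fin_cases i <;> simp

theorem coeff_aeval_symDetAct_diag (r : ℕ) {a : 𝔽} (ha : a ≠ 0) (β : 𝔽) :
    (aeval ![1, Polynomial.X]
      (symDetAct p r !![a, 0; 0, 1] ((C β * X 0 ^ 2 - X 1 ^ 2) ^ r))).coeff r =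
      if Even r then (r.choose (r / 2) : 𝔽) * (-β) ^ (r / 2) else 0 := by
  have heval : aeval ![1, Polynomial.X]
      (symDetAct p r !![a, 0; 0, 1] ((C β * X 0 ^ 2 - X 1 ^ 2) ^ r)) =
      Polynomial.C (a ^ r)⁻¹ * (Polynomial.C (β * a ^ 2) - Polynomial.X ^ 2) ^ r := by
    simp [aeval_symDetAct]
  rw [heval, Polynomial.coeff_C_mul, Polynomial.coeff_C_sub_X_sq_pow]
  split_ifs with hr
  · obtain ⟨k, rfl⟩ := hr
    rw [show (k + k) / 2 = k by omega, ← neg_mul, mul_pow, ← pow_mul, two_mul]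
    field_simp
  · rw [mul_zero]

theorem aeval_symDetAct_antidiag (r : ℕ) (β : 𝔽) :
    aeval ![(0 : 𝔽), 1] (symDetAct p r !![0, β; 1, 0] (X 0 ^ r * X 1 ^ r)) =
      if r = 0 then 1 else 0 := by
  rcases eq_or_ne r 0 with rfl | hr <;> simp [aeval_symDetAct, *]

theorem aeval_symDetAct_nonsplit (r : ℕ) (β z : 𝔽) :
    aeval ![(0 : 𝔽), 1] (symDetAct p r !![1, β * z; z, 1] (X 0 ^ r * X 1 ^ r)) =
      z ^ r / (1 - β * z ^ 2) ^ r := by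
  simp [aeval_symDetAct, div_eq_inv_mul, sq, mul_assoc]

theorem coeff_aeval_splitTorusAverage (r : ℕ) (β : 𝔽) :
    (aeval ![1, Polynomial.X] (splitTorusAverage p r ((C β * X 0 ^ 2 - X 1 ^ 2) ^ r))).coeff r =
      if Even r then (r.choose (r / 2) : 𝔽) * (-β) ^ (r / 2) else 0 := by
  have hunit (a : (ZMod p)ˣ) : algebraMap (ZMod p) 𝔽 a ≠ 0 := by simp
  simp only [splitTorusAverage, map_mul, map_sum, aeval_C, Polynomial.algebraMap_eq,
    Polynomial.coeff_C_mul, Polynomial.finsetSum_coeff, coeff_aeval_symDetAct_diag _ (hunit _),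
    Finset.sum_const, Finset.card_univ, ZMod.card_units, nsmul_eq_mul,
    Nat.cast_pred (Fact.out : p.Prime).pos]
  rw [← mul_assoc, inv_mul_cancel₀ (by simp), one_mul]

theorem aeval_nonsplitTorusAverage (r : ℕ) (α : ZMod p) :
    aeval ![(0 : 𝔽), 1] (nonsplitTorusAverage p r α (X 0 ^ r * X 1 ^ r)) =
      algebraMap (ZMod p) 𝔽
        ((if r = 0 then 1 else 0) + ∑ z : ZMod p, z ^ r / (1 - α * z ^ 2) ^ r) := by
  simp only [nonsplitTorusAverage, map_mul, map_add, map_sum, aeval_C, Algebra.algebraMap_self,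
    RingHom.id_apply, CharP.cast_eq_zero, zero_add, inv_one, one_mul, aeval_symDetAct_antidiag,
    aeval_symDetAct_nonsplit]
  simp [apply_ite (algebraMap (ZMod p) 𝔽)]

end

theorem stmt_19_general (p : ℕ) [Fact p.Prime] (hodd : Odd p) (r : ℕ) (hr : r ≤ p - 1)
    (α : (ZMod p)ˣ) (hα : ∀ x : ZMod p, x ^ 2 ≠ (α : ZMod p))
    (s t : AlgebraicClosure (ZMod p))
    (hs : C (((p : AlgebraicClosure (ZMod p)) - 1))⁻¹ *
        ∑ a : (ZMod p)ˣ,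
          symDetAct p r
            !![algebraMap (ZMod p) (AlgebraicClosure (ZMod p)) (a : ZMod p), 0; 0, 1]
            ((C (algebraMap (ZMod p) (AlgebraicClosure (ZMod p)) (α : ZMod p)) * X 0 ^ 2 -
                X 1 ^ 2) ^ r) =
      C s * (X 0 ^ r * X 1 ^ r))
    (ht : C (((p : AlgebraicClosure (ZMod p)) + 1))⁻¹ *
        (symDetAct p r
            !![0, algebraMap (ZMod p) (AlgebraicClosure (ZMod p)) (α : ZMod p); 1, 0]
            (X 0 ^ r * X 1 ^ r) +
          ∑ z : ZMod p,
            symDetAct p r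
              !![1, algebraMap (ZMod p) (AlgebraicClosure (ZMod p)) ((α : ZMod p) * z);
                algebraMap (ZMod p) (AlgebraicClosure (ZMod p)) z, 1]
              (X 0 ^ r * X 1 ^ r)) =
      C t * ((C (algebraMap (ZMod p) (AlgebraicClosure (ZMod p)) (α : ZMod p)) * X 0 ^ 2 -
          X 1 ^ 2) ^ r)) :
    s * t =
      if Even r then
        (-1 : AlgebraicClosure (ZMod p)) ^ ((p - 1) / 2) *
          (Nat.choose r (r / 2) : AlgebraicClosure (ZMod p)) *
          (Nat.choose (p - 1 - r) ((p - 1 - r) / 2) : AlgebraicClosure (ZMod p))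
      else 0 := by
  set β := algebraMap (ZMod p) (AlgebraicClosure (ZMod p)) (α : ZMod p)
  set n := p - 1 - r
  have hX : splitTorusAverage p r ((C β * X 0 ^ 2 - X 1 ^ 2) ^ r) = C s * (X 0 ^ r * X 1 ^ r) :=
    hs
  have hY : nonsplitTorusAverage p r α (X 0 ^ r * X 1 ^ r) = C t * (C β * X 0 ^ 2 - X 1 ^ 2) ^ r :=
    ht
  have hα' : ¬IsSquare (α : ZMod p) := fun ⟨y, hy⟩ => hα y (by rw [sq, hy])
  have hs' : s = if Even r then (r.choose (r / 2) : AlgebraicClosure (ZMod p)) * (-β) ^ (r / 2)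
      else 0 := by
    have h := congrArg
      (fun f => (aeval ![1, (Polynomial.X : Polynomial (AlgebraicClosure (ZMod p)))] f).coeff r)
      hX
    simp only [coeff_aeval_splitTorusAverage] at h
    simpa using h.symm
  split_ifs with hre
  swap
  · rw [hs', if_neg hre, zero_mul]
  obtain ⟨c, hc⟩ := hodd
  have ⟨m, hm⟩ := hre
  have hn : Even n := ⟨c - m, by omega⟩
  have ht' : t = -((n.choose (n / 2) : AlgebraicClosure (ZMod p)) * (-β) ^ (n / 2)) := by
    have h := congrArg (aeval ![(0 : AlgebraicClosure (ZMod p)), 1]) hY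
    have hsum := FiniteField.sum_pow_div_one_sub_mul_sq_pow hα' (by simpa using hr)
      (by simpa using hn)
    rw [ZMod.card] at hsum
    rw [aeval_nonsplitTorusAverage, hsum] at h
    simpa [hre.neg_one_pow] using h.symm
  have hβ : β ^ (r / 2 + n / 2) = -1 := by
    rw [← map_pow, show r / 2 + n / 2 = p / 2 by omega,
      ZMod.pow_div_two_eq_neg_one_of_not_isSquare hα', map_neg, map_one]
  rw [hs', if_pos hre, ht', show (p - 1) / 2 = r / 2 + n / 2 by omega]
  linear_combination (-(r.choose (r / 2) : AlgebraicClosure (ZMod p)) * (n.choose (n / 2)) *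
    (-1) ^ (r / 2 + n / 2)) * hβ

/-- Let `p` be an odd prime, `0 ≤ r ≤ p - 1`, and `ρ = Sym^{2r}(F̄_p²) ⊗ det^{-r}` the
mod-`p` representation of `PGL₂(F_p)`, with `α ∈ F_p^×` a non-square such that
`k_α = [[1,α],[1,1]]` has order `p + 1` in `PGL₂(F_p)`, so that the non-split torus
`K = ⟨k_α⟩` consists of the classes of `[[1,αz],[z,1]]` (`z ∈ F_p`) and `[[0,α],[1,0]]`.
Let `X` (resp. `Y`) be the averaging operator over the split torus `H` (resp. over `K`),
`v_H = x^r y^r`, `v_K = (αx² - y²)^r`, and define `s, t` by `X v_K = s v_H`,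
`Y v_H = t v_K`. Then `s t = (-1)^{(p-1)/2} C(r, r/2) C(p-1-r, (p-1-r)/2)` in `F_p` if
`r` is even, and `s t = 0` if `r` is odd. -/
theorem stmt_19 (p : ℕ) [Fact p.Prime] (hodd : Odd p) (r : ℕ) (hr : r ≤ p - 1)
    (α : (ZMod p)ˣ) (hα : ∀ x : ZMod p, x ^ 2 ≠ (α : ZMod p))
    (k : GL (Fin 2) (ZMod p))
    (hk : (k : Matrix (Fin 2) (Fin 2) (ZMod p)) = !![1, (α : ZMod p); 1, 1])
    (hord : orderOf
        (QuotientGroup.mk k :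
          GL (Fin 2) (ZMod p) ⧸ Subgroup.center (GL (Fin 2) (ZMod p))) = p + 1)
    (s t : AlgebraicClosure (ZMod p))
    (hs : C (((p : AlgebraicClosure (ZMod p)) - 1))⁻¹ *
        ∑ a : (ZMod p)ˣ,
          symDetAct p r
            !![algebraMap (ZMod p) (AlgebraicClosure (ZMod p)) (a : ZMod p), 0; 0, 1]
            ((C (algebraMap (ZMod p) (AlgebraicClosure (ZMod p)) (α : ZMod p)) * X 0 ^ 2 -
                X 1 ^ 2) ^ r) =
      C s * (X 0 ^ r * X 1 ^ r))
    (ht : C (((p : AlgebraicClosure (ZMod p)) + 1))⁻¹ *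
        (symDetAct p r
            !![0, algebraMap (ZMod p) (AlgebraicClosure (ZMod p)) (α : ZMod p); 1, 0]
            (X 0 ^ r * X 1 ^ r) +
          ∑ z : ZMod p,
            symDetAct p r
              !![1, algebraMap (ZMod p) (AlgebraicClosure (ZMod p)) ((α : ZMod p) * z);
                algebraMap (ZMod p) (AlgebraicClosure (ZMod p)) z, 1]
              (X 0 ^ r * X 1 ^ r)) =
      C t * ((C (algebraMap (ZMod p) (AlgebraicClosure (ZMod p)) (α : ZMod p)) * X 0 ^ 2 -
          X 1 ^ 2) ^ r)) :
    s * t =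
      if Even r then
        (-1 : AlgebraicClosure (ZMod p)) ^ ((p - 1) / 2) *
          (Nat.choose r (r / 2) : AlgebraicClosure (ZMod p)) *
          (Nat.choose (p - 1 - r) ((p - 1 - r) / 2) : AlgebraicClosure (ZMod p))
      else 0 :=
  stmt_19_general p hodd r hr α hα s t hs ht
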